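/- In B_n (Artin presentation), suppose P ≥ e (P is a positive braid) and R P ≥ Δ for some positive braid R. Let P = A_0 P_0 be the left-greedy decomposition of P, i.e. A_0 ∈ Q is the maximal head of P. Then R A_0 ≥ Δ. -/

import Mathlib

/- Braid group `B n` on `n` strands, Artin presentation. -/
namespace Braid

open scoped Classical

/-- Relators of the Artin presentation of the braid group on `n` strands:
generators `σ_1, …, σ_{n-1}` (indexed by `Fin (n-1)`), with commutation
relations for distant generators and braid relations for adjacent ones. -/
def braidRels (n : ℕ) : Set (FreeGroup (Fin (n - 1))) :=
  {w | (∃ i j : Fin (n - 1), (i : ℕ) + 2 ≤ (j : ℕ) ∧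
        w = FreeGroup.of i * FreeGroup.of j * (FreeGroup.of i)⁻¹ * (FreeGroup.of j)⁻¹) ∨
       (∃ i j : Fin (n - 1), (j : ℕ) = (i : ℕ) + 1 ∧
        w = FreeGroup.of i * FreeGroup.of j * FreeGroup.of i *
            (FreeGroup.of j * FreeGroup.of i * FreeGroup.of j)⁻¹)}

/-- The braid group on `n` strands. -/
abbrev B (n : ℕ) := PresentedGroup (braidRels n)

/-- The Artin generator `σ_{i+1}` (0-indexed by `i : Fin (n-1)`). -/
def gen {n : ℕ} (i : Fin (n - 1)) : B n := PresentedGroup.of i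

/-- The submonoid `B_n^+` of positive braids. -/
def Pos (n : ℕ) : Submonoid (B n) := Submonoid.closure (Set.range (gen (n := n)))

/-- `LeR W V` is the relation `W ≤ V`: `V = W * P` for some positive `P`. -/
def LeR {n : ℕ} (W V : B n) : Prop := ∃ P ∈ Pos n, V = W * P

/-- `GeL V W` is the relation `V ≥ W`: `V = P * W` for some positive `P`. -/
def GeL {n : ℕ} (V W : B n) : Prop := ∃ P ∈ Pos n, V = P * W

/-- The Artin generator, indexed by natural numbers (junk value `1` out of range). -/
def gen' (n : ℕ) (i : ℕ) : B n := if h : i < n - 1 then gen ⟨i, h⟩ else 1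

/-- The fundamental (half-twist) braid
`Δ = (σ_1⋯σ_{n-1})(σ_1⋯σ_{n-2})⋯(σ_1σ_2)σ_1`. -/
def Delta (n : ℕ) : B n :=
  (((List.range (n - 1)).reverse).map fun k => ((List.range (k + 1)).map (gen' n)).prod).prod

/-- `Q`, the set of positive left divisors of `Δ` (the permutation braids). -/
def QSet (n : ℕ) : Set (B n) := {A | A ∈ Pos n ∧ ∃ C ∈ Pos n, A * C = Delta n}

/-- `Q* = Q \ {e, Δ}`. -/
def QStar (n : ℕ) : Set (B n) := QSet n \ {1, Delta n}

/-- `A` is the maximal head of the positive braid `P`: `A ∈ Q`, `P = A·P₀` with `P₀`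
positive, and any decomposition `P = A'·P'` with `A' ∈ Q`, `P'` positive has `A' ≤ A`. -/
def IsMaxHead {n : ℕ} (A P : B n) : Prop :=
  A ∈ QSet n ∧ (∃ P₀ ∈ Pos n, P = A * P₀) ∧
    ∀ A' ∈ QSet n, ∀ P' ∈ Pos n, P = A' * P' → LeR A' A

/-- `IsNF W u L` : `W = Δ^u A_1 ⋯ A_k` is a left-greedy normal form, where
`L = [A_1, …, A_k]`, each `A_i ∈ Q*` and each consecutive product `A_i A_{i+1}`
is left-greedy. -/
def IsNF {n : ℕ} (W : B n) (u : ℤ) (L : List (B n)) : Prop :=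
  W = Delta n ^ u * L.prod ∧ (∀ A ∈ L, A ∈ QStar n) ∧
    L.Chain' fun A A' => IsMaxHead A (A * A')

/-- A (the) normal form of a braid, chosen by choice. -/
noncomputable def nf {n : ℕ} (W : B n) : ℤ × List (B n) :=
  if h : ∃ p : ℤ × List (B n), IsNF W p.1 p.2 then h.choose else (0, [])

/-- `inf W`, the infimum of `W`: the power of `Δ` in the normal form. -/
noncomputable def binf {n : ℕ} (W : B n) : ℤ := (nf W).1

/-- `sup W = inf W + (number of canonical factors)`. -/
noncomputable def bsup {n : ℕ} (W : B n) : ℤ := (nf W).1 + (nf W).2.length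

/-- Cycling: for `W = Δ^u A_1 A_2 ⋯ A_k` in normal form,
`c(W) = Δ^u A_2 ⋯ A_k τ^{-u}(A_1)`. -/
noncomputable def cyc {n : ℕ} (τ : MulAut (B n)) (W : B n) : B n :=
  match (nf W).2 with
  | [] => W
  | A :: L => Delta n ^ (nf W).1 * L.prod * (τ ^ (-(nf W).1)) A

/-- Decycling: for `W = Δ^u A_1 ⋯ A_k` in normal form,
`d(W) = Δ^u τ^u(A_k) A_1 ⋯ A_{k-1}`. -/
noncomputable def decyc {n : ℕ} (τ : MulAut (B n)) (W : B n) : B n :=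
  if h : (nf W).2 = [] then W
  else Delta n ^ (nf W).1 * (τ ^ (nf W).1) ((nf W).2.getLast h) * (nf W).2.dropLast.prod

/-- `τ` is the automorphism of `B n` with `τ(σ_i) = σ_{n-i}` (in 1-indexed terms). -/
def TauSpec {n : ℕ} (τ : MulAut (B n)) : Prop :=
  ∀ i : Fin (n - 1), τ (gen i) = gen i.rev

/-- The letter length of a positive braid: the number of generators in a
shortest positive word representing it (for a positive braid, every positive
word representing it has this length). -/
noncomputable def posLen {n : ℕ} (P : B n) : ℕ :=
  sInf {k | ∃ L : List (Fin (n - 1)), L.length = k ∧ P = (L.map gen).prod}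

end Braid


namespace Braid
namespace Word

abbrev W := List ℕ

def far (i j : ℕ) : Prop := i + 2 ≤ j ∨ j + 2 ≤ i
def near (i j : ℕ) : Prop := j = i + 1 ∨ i = j + 1

theorem far.symm {i j : ℕ} (h : far i j) : far j i := h.elim .inr .inl
theorem near.symm {i j : ℕ} (h : near i j) : near j i := h.elim .inr .inl
theorem far.ne {i j : ℕ} (h : far i j) : i ≠ j := by rcases h with h|h <;> omega
theorem near.ne {i j : ℕ} (h : near i j) : i ≠ j := by rcases h with h|h <;> omega
theorem near.not_far {i j : ℕ} (h : near i j) : ¬ far i j := by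
  rcases h with h|h <;> rintro (h'|h') <;> omega
theorem far.not_near {i j : ℕ} (h : far i j) : ¬ near i j := fun hn => hn.not_far h

theorem letter_cases (i j : ℕ) : i = j ∨ near i j ∨ far i j := by
  unfold near far; omega

inductive Mv : W → W → Prop
  | comm (a b : W) (i j : ℕ) (h : far i j) : Mv (a ++ i :: j :: b) (a ++ j :: i :: b)
  | braid (a b : W) (i j : ℕ) (h : near i j) : Mv (a ++ i :: j :: i :: b) (a ++ j :: i :: j :: b)

theorem Mv.symm {u v : W} (h : Mv u v) : Mv v u := by
  cases h with
  | comm a b i j h => exact .comm a b j i h.symm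
  | braid a b i j h => exact .braid a b j i h.symm

def beq : W → W → Prop := Relation.ReflTransGen Mv

local infix:50 " ≋ " => beq

@[refl] theorem beq.refl (u : W) : u ≋ u := Relation.ReflTransGen.refl

theorem beq.rfl {u : W} : u ≋ u := Relation.ReflTransGen.refl

theorem beq.trans {u v w : W} (h : u ≋ v) (h' : v ≋ w) : u ≋ w :=
  Relation.ReflTransGen.trans h h'

instance : Trans beq beq beq := ⟨Braid.Word.beq.trans⟩

theorem beq.symm {u v : W} (h : u ≋ v) : v ≋ u :=
  (@Relation.ReflTransGen.stdSymm _ Mv ⟨fun _ _ hm => hm.symm⟩).symm _ _ h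

theorem Mv.beq {u v : W} (h : Mv u v) : u ≋ v := Relation.ReflTransGen.single h

theorem Mv.length_eq {u v : W} (h : Mv u v) : u.length = v.length := by
  cases h <;> simp

theorem beq.length_eq {u v : W} (h : u ≋ v) : u.length = v.length := by
  induction h with
  | refl => rfl
  | tail _ hm ih => exact ih.trans hm.length_eq

theorem Mv.mem_imp {u v : W} (h : Mv u v) {P : ℕ → Prop} (hp : ∀ x ∈ u, P x) :
    ∀ x ∈ v, P x := by
  cases h with
  | comm a b i j _ => intro x hx; apply hp; simp at hx ⊢; tauto
  | braid a b i j _ => intro x hx; apply hp; simp at hx ⊢; tauto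

theorem beq.mem_imp {u v : W} (h : u ≋ v) {P : ℕ → Prop} (hp : ∀ x ∈ u, P x) :
    ∀ x ∈ v, P x := by
  induction h with
  | refl => exact hp
  | tail _ hm ih => exact hm.mem_imp ih

theorem Mv.append_left {u v : W} (x : W) (h : Mv u v) : Mv (x ++ u) (x ++ v) := by
  cases h with
  | comm a b i j hf => rw [← List.append_assoc, ← List.append_assoc]; exact .comm (x ++ a) b i j hf
  | braid a b i j hf =>
      rw [← List.append_assoc, ← List.append_assoc]; exact .braid (x ++ a) b i j hf

theorem Mv.append_right {u v : W} (x : W) (h : Mv u v) : Mv (u ++ x) (v ++ x) := by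
  cases h with
  | comm a b i j hf =>
      have := Mv.comm a (b ++ x) i j hf
      simpa using this
  | braid a b i j hf =>
      have := Mv.braid a (b ++ x) i j hf
      simpa using this

theorem beq.append_left {u v : W} (x : W) (h : u ≋ v) : x ++ u ≋ x ++ v := by
  induction h with
  | refl => rfl
  | tail _ hm ih => exact ih.trans (hm.append_left x).beq

theorem beq.append_right {u v : W} (x : W) (h : u ≋ v) : u ++ x ≋ v ++ x := by
  induction h with
  | refl => rfl
  | tail _ hm ih => exact ih.trans (hm.append_right x).beq

theorem beq.append {u v u' v' : W} (h : u ≋ u') (h' : v ≋ v') : u ++ v ≋ u' ++ v' :=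
  (h.append_right v).trans (h'.append_left u')

theorem beq.cons {u v : W} (i : ℕ) (h : u ≋ v) : i :: u ≋ i :: v :=
  h.append_left [i]

theorem beq_comm_head {i j : ℕ} (h : far i j) (t : W) : i :: j :: t ≋ j :: i :: t := by
  have := Mv.comm [] t i j h
  simpa using this.beq

theorem beq_braid_head {i j : ℕ} (h : near i j) (t : W) :
    i :: j :: i :: t ≋ j :: i :: j :: t := by
  have := Mv.braid [] t i j h
  simpa using this.beq

/-- a letter far from all letters of `w` commutes across `w` -/
theorem farcomm {i : ℕ} {w : W} (h : ∀ x ∈ w, far x i) (t : W) :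
    i :: (w ++ t) ≋ w ++ i :: t := by
  induction w with
  | nil => rfl
  | cons a w ih =>
      have ha : far i a := (h a (by simp)).symm
      calc i :: (a :: w ++ t) = i :: a :: (w ++ t) := rfl
        _ ≋ a :: i :: (w ++ t) := beq_comm_head ha _
        _ ≋ a :: (w ++ i :: t) := (ih (fun x hx => h x (by simp [hx]))).cons a

theorem farcomm2 {x p q : ℕ} (hp : far p x) (hq : far q x) (t : W) :
    x :: p :: q :: t ≋ p :: q :: x :: t := by
  have := farcomm (i := x) (w := [p, q])
    (by intro y hy; simp at hy; rcases hy with rfl | rfl <;> assumption) t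
  simpa using this

instance (i j : ℕ) : Decidable (near i j) := by unfold near; infer_instance
instance (i j : ℕ) : Decidable (far i j) := by unfold far; infer_instance

/-- the completion word: `lcm(σᵢ,σⱼ) = σᵢ ⬝ (cw i j)` -/
def cw (i j : ℕ) : W := if i = j then [] else if near i j then [j, i] else [j]

theorem cw_self (i : ℕ) : cw i i = [] := by simp [cw]

theorem cw_near {i j : ℕ} (h : near i j) : cw i j = [j, i] := by
  simp [cw, h.ne, h]

theorem cw_far {i j : ℕ} (h : far i j) : cw i j = [j] := by
  simp [cw, h.ne, h.not_near]

/- chain lemmas for the cube cases -/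

theorem chainC2cX {i a j : ℕ} (hia : far i a) (haj : near a j) (t : W) :
    a :: j :: a :: t ≋ j :: a :: j :: t := beq_braid_head haj t

theorem chainC2cY {i a j : ℕ} (hia : far i a) (hij : far i j) (t : W) :
    a :: j :: i :: t ≋ i :: a :: j :: t :=
  (farcomm2 hia.symm hij.symm t).symm

theorem chainL2X {i a j : ℕ} (hia : far i a) (haj : near a j) (hij : near i j) (t : W) :
    a :: j :: i :: a :: j :: t ≋ j :: i :: a :: j :: i :: t := by
  calc a :: j :: i :: a :: j :: t
      ≋ a :: j :: a :: i :: j :: t := ((beq_comm_head hia (j :: t)).cons j).cons a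
    _ ≋ j :: a :: j :: i :: j :: t := beq_braid_head haj _
    _ ≋ j :: a :: i :: j :: i :: t := ((beq_braid_head hij.symm t).cons a).cons j
    _ ≋ j :: i :: a :: j :: i :: t := (beq_comm_head hia.symm (j :: i :: t)).cons j

theorem chainL2Y {i a j : ℕ} (hia : far i a) (haj : near a j) (hij : near i j) (t : W) :
    a :: j :: i :: j :: a :: t ≋ i :: j :: a :: j :: i :: t := by
  calc a :: j :: i :: j :: a :: t
      ≋ a :: i :: j :: i :: a :: t := (beq_braid_head hij.symm (a :: t)).cons a
    _ ≋ i :: a :: j :: i :: a :: t := beq_comm_head hia.symm _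
    _ ≋ i :: a :: j :: a :: i :: t := ((beq_comm_head hia ( t)).cons j).cons a |>.cons i
    _ ≋ i :: j :: a :: j :: i :: t := (beq_braid_head haj (i :: t)).cons i

theorem chainL4X {i a j : ℕ} (hia : near i a) (haj : far a j) (hij : near i j) (t : W) :
    a :: i :: j :: i :: a :: t ≋ j :: i :: a :: i :: j :: t := by
  calc a :: i :: j :: i :: a :: t
      ≋ a :: j :: i :: j :: a :: t := (beq_braid_head hij (a :: t)).cons a
    _ ≋ j :: a :: i :: j :: a :: t := beq_comm_head haj _
    _ ≋ j :: a :: i :: a :: j :: t := ((beq_comm_head haj.symm t).cons i).cons a |>.cons j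
    _ ≋ j :: i :: a :: i :: j :: t := (beq_braid_head hia.symm (j :: t)).cons j

theorem chainL4Y {i a j : ℕ} (hia : near i a) (haj : far a j) (hij : near i j) (t : W) :
    a :: i :: j :: a :: i :: t ≋ i :: j :: a :: i :: j :: t := by
  calc a :: i :: j :: a :: i :: t
      ≋ a :: i :: a :: j :: i :: t := ((beq_comm_head haj.symm (i :: t)).cons i).cons a
    _ ≋ i :: a :: i :: j :: i :: t := beq_braid_head hia.symm _
    _ ≋ i :: a :: j :: i :: j :: t := ((beq_braid_head hij t).cons a).cons i
    _ ≋ i :: j :: a :: i :: j :: t := (beq_comm_head haj (i :: j :: t)).cons i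

theorem chainL5X {i a j : ℕ} (hia : near i a) (haj : near a j) (hij : far i j) (t : W) :
    a :: i :: j :: a :: i :: t ≋ j :: a :: j :: i :: a :: t := by
  calc a :: i :: j :: a :: i :: t
      ≋ a :: j :: i :: a :: i :: t := ((beq_comm_head hij (a :: i :: t)).cons a)
    _ ≋ a :: j :: a :: i :: a :: t := ((beq_braid_head hia t).cons j).cons a
    _ ≋ j :: a :: j :: i :: a :: t := beq_braid_head haj _

theorem chainL5Y {i a j : ℕ} (hia : near i a) (haj : near a j) (hij : far i j) (t : W) :
    a :: j :: i :: a :: j :: t ≋ i :: a :: j :: i :: a :: t := by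
  calc a :: j :: i :: a :: j :: t
      ≋ a :: i :: j :: a :: j :: t := (beq_comm_head hij.symm (a :: j :: t)).cons a
    _ ≋ a :: i :: a :: j :: a :: t := ((beq_braid_head haj.symm t).cons i).cons a
    _ ≋ i :: a :: i :: j :: a :: t := beq_braid_head hia.symm _
    _ ≋ i :: a :: j :: i :: a :: t := ((beq_comm_head hij (a :: t)).cons a).cons i

/-- destructing a move on a word with known head -/
theorem mv_destruct {u W₁ : W} (h : Mv u W₁) :
    ∀ i X', u = i :: X' →
    (∃ W₁', W₁ = i :: W₁' ∧ Mv X' W₁') ∨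
    (∃ a b, far i a ∧ X' = a :: b ∧ W₁ = a :: i :: b) ∨
    (∃ a b, near i a ∧ X' = a :: i :: b ∧ W₁ = a :: i :: a :: b) := by
  cases h with
  | comm a b x y hf =>
      intro i X' hu
      cases a with
      | nil =>
          simp at hu
          obtain ⟨rfl, rfl⟩ := hu
          right; left; exact ⟨y, b, hf, rfl, rfl⟩
      | cons c a' =>
          simp at hu
          obtain ⟨rfl, rfl⟩ := hu
          left; exact ⟨a' ++ y :: x :: b, rfl, Mv.comm a' b x y hf⟩
  | braid a b x y hf =>
      intro i X' hu
      cases a with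
      | nil =>
          simp at hu
          obtain ⟨rfl, rfl⟩ := hu
          right; right; exact ⟨y, b, hf, rfl, rfl⟩
      | cons c a' =>
          simp at hu
          obtain ⟨rfl, rfl⟩ := hu
          left; exact ⟨a' ++ y :: x :: y :: b, rfl, Mv.braid a' b x y hf⟩

set_option maxHeartbeats 1000000 in
/-- Garside's Theorem H -/
theorem thmH : ∀ (N : ℕ) (X Y : W), X.length ≤ N → X ≋ Y →
    ∀ i X' j Y', X = i :: X' → Y = j :: Y' →
    ∃ Z, X' ≋ cw i j ++ Z ∧ Y' ≋ cw j i ++ Z := by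
  intro N
  induction N using Nat.strong_induction_on with
  | _ N IH =>
  have IH' : ∀ X Y : W, X.length < N → X ≋ Y →
      ∀ i X' j Y', X = i :: X' → Y = j :: Y' →
      ∃ Z, X' ≋ cw i j ++ Z ∧ Y' ≋ cw j i ++ Z :=
    fun X Y h => IH X.length h X Y le_rfl
  intro X Y hlen hXY
  revert hlen
  induction hXY using Relation.ReflTransGen.head_induction_on with
  | refl =>
      intro hlen i X' j Y' hX hY
      rw [hX] at hY
      injection hY with h1 h2
      subst h1; subst h2
      exact ⟨X', by simp only [cw_self, List.nil_append]; exact beq.rfl,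
        by simp only [cw_self, List.nil_append]; exact beq.rfl⟩
  | head step rest ih =>
      rename_i X W₁
      intro hlen i X' j Y' hX hY
      subst hX
      have hlen₁ : W₁.length ≤ N := by rw [← step.length_eq]; exact hlen
      rcases mv_destruct step i X' rfl with
        ⟨W₁', rfl, hmv⟩ | ⟨a, b, hia, rfl, rfl⟩ | ⟨a, b, hia, rfl, rfl⟩
      · -- move inside the tail
        obtain ⟨Z₁, h1, h2⟩ := ih hlen₁ i W₁' j Y' rfl hY
        exact ⟨Z₁, hmv.beq.trans h1, h2⟩
      · -- commutation at the head : X = i :: a :: b, W₁ = a :: i :: b, far i a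
        obtain ⟨Z₁, E, F⟩ := ih hlen₁ a (i :: b) j Y' rfl hY
        have hlX : b.length + 2 ≤ N := by have h := hlen; simp at h; omega
        rcases letter_cases a j with rfl | haj | haj
        · -- C1 : a = j
          rw [cw_self] at E F
          refine ⟨b, ?_, ?_⟩
          · simp only [cw_far hia, List.cons_append, List.nil_append]; exact beq.rfl
          · simp only [cw_far hia.symm, List.cons_append, List.nil_append]
            exact F.trans E.symm
        · -- C2-near : near a j
          rw [cw_near haj] at E
          rw [cw_near haj.symm] at F
          obtain ⟨Z₂, e1, e2⟩ := IH' (i :: b) (j :: a :: Z₁) (by simp; omega) E i b j (a :: Z₁) rfl rfl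
          rcases letter_cases i j with rfl | hij | hij
          · -- i = j : contradiction with far i a and near a j
            exact (haj.not_far hia.symm).elim
          · -- C2c-ii : near i j
            rw [cw_near hij] at e1
            rw [cw_near hij.symm] at e2
            have hlZ₂ : (a :: Z₁).length < N := by
              have := e2.length_eq; have := e1.length_eq
              simp at *; omega
            obtain ⟨Z₃, f1, f2⟩ := IH' (a :: Z₁) (i :: j :: Z₂) hlZ₂ e2 a Z₁ i (j :: Z₂) rfl rfl
            rw [cw_far hia.symm] at f1
            rw [cw_far hia] at f2
            have hlf2 : (j :: Z₂).length < N := by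
              have := e1.length_eq; simp at *; omega
            obtain ⟨Z₄, g1, g2⟩ := IH' (j :: Z₂) (a :: Z₃) hlf2 f2 j Z₂ a Z₃ rfl rfl
            rw [cw_near haj.symm] at g1
            rw [cw_near haj] at g2
            refine ⟨a :: j :: i :: Z₄, ?_, ?_⟩
            · rw [cw_near hij]
              calc a :: b ≋ a :: j :: i :: Z₂ := e1.cons a
                _ ≋ a :: j :: i :: a :: j :: Z₄ := (g1.cons i |>.cons j |>.cons a)
                _ ≋ j :: i :: a :: j :: i :: Z₄ := chainL2X hia haj hij Z₄
            · rw [cw_near hij.symm]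
              calc Y' ≋ a :: j :: Z₁ := F
                _ ≋ a :: j :: i :: Z₃ := (f1.cons j |>.cons a)
                _ ≋ a :: j :: i :: j :: a :: Z₄ := (g2.cons i |>.cons j |>.cons a)
                _ ≋ i :: j :: a :: j :: i :: Z₄ := chainL2Y hia haj hij Z₄
          · -- C2c-i : far i j
            rw [cw_far hij] at e1
            rw [cw_far hij.symm] at e2
            have hlZ₂ : (a :: Z₁).length < N := by
              have := e2.length_eq; have := e1.length_eq
              simp at *; omega
            obtain ⟨Z₃, f1, f2⟩ := IH' (a :: Z₁) (i :: Z₂) hlZ₂ e2 a Z₁ i Z₂ rfl rfl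
            rw [cw_far hia.symm] at f1
            rw [cw_far hia] at f2
            refine ⟨a :: j :: Z₃, ?_, ?_⟩
            · rw [cw_far hij]
              calc a :: b ≋ a :: j :: Z₂ := e1.cons a
                _ ≋ a :: j :: a :: Z₃ := (f2.cons j |>.cons a)
                _ ≋ j :: a :: j :: Z₃ := chainC2cX hia haj Z₃
            · rw [cw_far hij.symm]
              calc Y' ≋ a :: j :: Z₁ := F
                _ ≋ a :: j :: i :: Z₃ := (f1.cons j |>.cons a)
                _ ≋ i :: a :: j :: Z₃ := chainC2cY hia hij Z₃
        · -- C2-far : far a j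
          rw [cw_far haj] at E
          rw [cw_far haj.symm] at F
          obtain ⟨Z₂, e1, e2⟩ := IH' (i :: b) (j :: Z₁) (by simp; omega) E i b j Z₁ rfl rfl
          rcases letter_cases i j with rfl | hij | hij
          · -- C2a with i = j
            rw [cw_self] at e1 e2
            simp only [List.nil_append] at e1 e2
            exact ⟨a :: Z₂, by rw [cw_self]; exact e1.cons a,
              by rw [cw_self]; exact F.trans (e2.cons a)⟩
          · -- C2-far, near i j : commute a across cw i j
            rw [cw_near hij] at e1
            rw [cw_near hij.symm] at e2
            refine ⟨a :: Z₂, ?_, ?_⟩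
            · rw [cw_near hij]
              calc a :: b ≋ a :: j :: i :: Z₂ := e1.cons a
                _ ≋ j :: i :: a :: Z₂ := farcomm2 haj.symm hia.symm.symm Z₂
            · rw [cw_near hij.symm]
              calc Y' ≋ a :: Z₁ := F
                _ ≋ a :: i :: j :: Z₂ := e2.cons a
                _ ≋ i :: j :: a :: Z₂ := farcomm2 hia.symm.symm haj.symm Z₂
          · -- C2-far, far i j
            rw [cw_far hij] at e1
            rw [cw_far hij.symm] at e2
            refine ⟨a :: Z₂, ?_, ?_⟩
            · rw [cw_far hij]
              calc a :: b ≋ a :: j :: Z₂ := e1.cons a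
                _ ≋ j :: a :: Z₂ := beq_comm_head haj _
            · rw [cw_far hij.symm]
              calc Y' ≋ a :: Z₁ := F
                _ ≋ a :: i :: Z₂ := e2.cons a
                _ ≋ i :: a :: Z₂ := beq_comm_head hia.symm _
      · -- braid at the head : X = i :: a :: i :: b, W₁ = a :: i :: a :: b, near i a
        obtain ⟨Z₁, E, F⟩ := ih hlen₁ a (i :: a :: b) j Y' rfl hY
        have hlX : b.length + 3 ≤ N := by have h := hlen; simp at h; omega
        rcases letter_cases a j with rfl | haj | haj
        · -- B1 : a = j
          rw [cw_self] at E F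
          refine ⟨b, ?_, ?_⟩
          · simp only [cw_near hia, List.cons_append, List.nil_append]; exact beq.rfl
          · simp only [cw_near hia.symm, List.cons_append, List.nil_append]
            exact F.trans E.symm
        · -- B2-near : near a j
          rw [cw_near haj] at E
          rw [cw_near haj.symm] at F
          obtain ⟨Z₂, e1, e2⟩ :=
            IH' (i :: a :: b) (j :: a :: Z₁) (by simp; omega) E i (a :: b) j (a :: Z₁) rfl rfl
          rcases letter_cases i j with rfl | hij | hij
          · -- B2a : i = j
            rw [cw_self] at e1 e2
            simp only [List.nil_append] at e1 e2
            have hcomb : (a :: b) ≋ (a :: Z₁) := e1.trans e2.symm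
            obtain ⟨Z₅, w1, w2⟩ := IH' (a :: b) (a :: Z₁) (by simp; omega) hcomb a b a Z₁ rfl rfl
            rw [cw_self] at w1 w2
            simp only [List.nil_append] at w1 w2
            refine ⟨a :: i :: Z₅, ?_, ?_⟩
            · rw [cw_self]; exact (w1.cons i |>.cons a)
            · rw [cw_self]
              calc Y' ≋ a :: i :: Z₁ := F
                _ ≋ a :: i :: Z₅ := (w2.cons i |>.cons a)
          · -- δ : impossible
            exfalso
            rcases hia with h1|h1 <;> rcases haj with h2|h2 <;> rcases hij with h3|h3 <;> omega
          · -- γ : far i j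
            rw [cw_far hij] at e1
            rw [cw_far hij.symm] at e2
            have hl2 : (a :: Z₁).length < N := by
              have h1 := e1.length_eq; have h2 := e2.length_eq; simp at h1 h2 ⊢; omega
            obtain ⟨Z₃, f1, f2⟩ := IH' (a :: Z₁) (i :: Z₂) hl2 e2 a Z₁ i Z₂ rfl rfl
            rw [cw_near hia.symm] at f1
            rw [cw_near hia] at f2
            have hl1 : (a :: b).length < N := by simp; omega
            obtain ⟨Z₆, u1, u2⟩ := IH' (a :: b) (j :: Z₂) hl1 e1 a b j Z₂ rfl rfl
            rw [cw_near haj] at u1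
            rw [cw_near haj.symm] at u2
            -- combine the two decompositions of Z₂
            have hcomb : (a :: i :: Z₃) ≋ (a :: j :: Z₆) := by
              calc a :: i :: Z₃ ≋ Z₂ := f2.symm
                _ ≋ a :: j :: Z₆ := u2
            have hlc : (a :: i :: Z₃).length < N := by
              have h1 := f2.length_eq; have h2 := e1.length_eq; simp at h1 h2 ⊢; omega
            obtain ⟨Z₇, w1, w2⟩ :=
              IH' (a :: i :: Z₃) (a :: j :: Z₆) hlc hcomb a (i :: Z₃) a (j :: Z₆) rfl rfl
            rw [cw_self] at w1 w2
            simp only [List.nil_append] at w1 w2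
            have hij2 : (i :: Z₃) ≋ (j :: Z₆) := w1.trans w2.symm
            have hlij2 : (i :: Z₃).length < N := by
              have h1 := f2.length_eq; have h2 := e1.length_eq; simp at h1 h2 ⊢; omega
            obtain ⟨Z₈, g1, g2⟩ := IH' (i :: Z₃) (j :: Z₆) hlij2 hij2 i Z₃ j Z₆ rfl rfl
            rw [cw_far hij] at g1
            rw [cw_far hij.symm] at g2
            refine ⟨a :: j :: i :: a :: Z₈, ?_, ?_⟩
            · rw [cw_far hij]
              calc a :: i :: b ≋ a :: i :: j :: a :: Z₆ := (u1.cons i |>.cons a)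
                _ ≋ a :: i :: j :: a :: i :: Z₈ := (g2.cons a |>.cons j |>.cons i |>.cons a)
                _ ≋ j :: a :: j :: i :: a :: Z₈ := chainL5X hia haj hij Z₈
            · rw [cw_far hij.symm]
              calc Y' ≋ a :: j :: Z₁ := F
                _ ≋ a :: j :: i :: a :: Z₃ := (f1.cons j |>.cons a)
                _ ≋ a :: j :: i :: a :: j :: Z₈ := (g1.cons a |>.cons i |>.cons j |>.cons a)
                _ ≋ i :: a :: j :: i :: a :: Z₈ := chainL5Y hia haj hij Z₈
        · -- B2-far : far a j
          rw [cw_far haj] at E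
          rw [cw_far haj.symm] at F
          obtain ⟨Z₂, e1, e2⟩ :=
            IH' (i :: a :: b) (j :: Z₁) (by simp; omega) E i (a :: b) j Z₁ rfl rfl
          rcases letter_cases i j with rfl | hij | hij
          · -- impossible : near i a & far a i
            exact (hia.symm.not_far haj).elim
          · -- β : near i j
            rw [cw_near hij] at e1
            rw [cw_near hij.symm] at e2
            have hl1 : (a :: b).length < N := by simp; omega
            obtain ⟨Z₆, u1, u2⟩ := IH' (a :: b) (j :: i :: Z₂) hl1 e1 a b j (i :: Z₂) rfl rfl
            rw [cw_far haj] at u1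
            rw [cw_far haj.symm] at u2
            have hl2 : (i :: Z₂).length < N := by
              have := e1.length_eq; simp at *; omega
            obtain ⟨Z₇, v1, v2⟩ := IH' (i :: Z₂) (a :: Z₆) hl2 u2 i Z₂ a Z₆ rfl rfl
            rw [cw_near hia] at v1
            rw [cw_near hia.symm] at v2
            refine ⟨a :: i :: j :: Z₇, ?_, ?_⟩
            · rw [cw_near hij]
              calc a :: i :: b ≋ a :: i :: j :: Z₆ := (u1.cons i |>.cons a)
                _ ≋ a :: i :: j :: i :: a :: Z₇ := (v2.cons j |>.cons i |>.cons a)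
                _ ≋ j :: i :: a :: i :: j :: Z₇ := chainL4X hia haj hij Z₇
            · rw [cw_near hij.symm]
              calc Y' ≋ a :: Z₁ := F
                _ ≋ a :: i :: j :: Z₂ := e2.cons a
                _ ≋ a :: i :: j :: a :: i :: Z₇ := (v1.cons j |>.cons i |>.cons a)
                _ ≋ i :: j :: a :: i :: j :: Z₇ := chainL4Y hia haj hij Z₇
          · -- α : far i j
            rw [cw_far hij] at e1
            rw [cw_far hij.symm] at e2
            have hl1 : (a :: b).length < N := by simp; omega
            obtain ⟨Z₆, u1, u2⟩ := IH' (a :: b) (j :: Z₂) hl1 e1 a b j Z₂ rfl rfl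
            rw [cw_far haj] at u1
            rw [cw_far haj.symm] at u2
            refine ⟨a :: i :: Z₆, ?_, ?_⟩
            · rw [cw_far hij]
              calc a :: i :: b ≋ a :: i :: j :: Z₆ := (u1.cons i |>.cons a)
                _ ≋ j :: a :: i :: Z₆ := (farcomm2 haj hij Z₆).symm
            · rw [cw_far hij.symm]
              calc Y' ≋ a :: Z₁ := F
                _ ≋ a :: i :: Z₂ := e2.cons a
                _ ≋ a :: i :: a :: Z₆ := (u2.cons i |>.cons a)
                _ ≋ i :: a :: i :: Z₆ := beq_braid_head hia.symm Z₆


/- ### Corollaries of Theorem H -/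

theorem cancel_cons {i : ℕ} {u v : W} (h : i :: u ≋ i :: v) : u ≋ v := by
  obtain ⟨Z, h1, h2⟩ := thmH (i :: u).length _ _ le_rfl h i u i v rfl rfl
  rw [cw_self, List.nil_append] at h1 h2
  exact h1.trans h2.symm

theorem cancel_append {w u v : W} (h : w ++ u ≋ w ++ v) : u ≋ v := by
  induction w with
  | nil => simpa using h
  | cons a w ih => exact ih (cancel_cons (by simpa using h))

theorem lcm_cons {i j : ℕ} {u v : W} (h : i :: u ≋ j :: v) :
    ∃ Z, u ≋ cw i j ++ Z ∧ v ≋ cw j i ++ Z :=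
  thmH (i :: u).length _ _ le_rfl h i u j v rfl rfl

theorem Mv.rev {u v : W} (h : Mv u v) : Mv u.reverse v.reverse := by
  cases h with
  | comm a b i j hf =>
      have := Mv.comm b.reverse a.reverse j i hf.symm
      simpa using this
  | braid a b i j hf =>
      have := Mv.braid b.reverse a.reverse i j hf
      simpa using this

theorem beq.rev {u v : W} (h : u ≋ v) : u.reverse ≋ v.reverse := by
  induction h with
  | refl => exact beq.rfl
  | tail _ hm ih => exact ih.trans hm.rev.beq

theorem cancel_append_right {w u v : W} (h : u ++ w ≋ v ++ w) : u ≋ v := by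
  have := cancel_append (w := w.reverse) (u := u.reverse) (v := v.reverse)
    (by simpa using h.rev)
  simpa using this.rev

/- ### Δ-word facts -/

/-- the word for Δ over letters `0, …, m-1` -/
def dw (m : ℕ) : W := (List.range m).reverse.flatMap (fun k => List.range (k + 1))

/-- the descending word `m-1, …, 0` -/
def vw (m : ℕ) : W := (List.range m).reverse

theorem dw_zero : dw 0 = [] := rfl

theorem dw_succ (m : ℕ) : dw (m + 1) = List.range (m + 1) ++ dw m := by
  simp [dw, List.range_succ]

theorem vw_succ (m : ℕ) : vw (m + 1) = m :: vw m := by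
  simp [vw, List.range_succ]

theorem dw_mem {m x : ℕ} (h : x ∈ dw m) : x < m := by
  induction m with
  | zero => simp [dw_zero] at h
  | succ m ih =>
      rw [dw_succ] at h
      rcases List.mem_append.mp h with h | h
      · simpa using List.mem_range.mp h
      · exact (ih h).trans (Nat.lt_succ_self m)

theorem vw_mem {m x : ℕ} (h : x ∈ vw m) : x < m := by
  simpa [vw] using h

/-- pushing a letter through the ascending run: `(σ₀⋯σ_{k-1})σ_j ≋ σ_{j+1}(σ₀⋯σ_{k-1})` -/
theorem push_lemma {k j : ℕ} (h : j + 1 < k) : List.range k ++ [j] ≋ (j + 1) :: List.range k := by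
  obtain ⟨r, rfl⟩ : ∃ r, k = (j + 2) + r := ⟨k - (j + 2), by omega⟩
  rw [List.range_add]
  have hcore : List.range (j + 2) ++ [j] ≋ (j + 1) :: List.range (j + 2) := by
    have h1 : List.range (j + 2) = List.range j ++ [j, j + 1] := by
      rw [List.range_succ, List.range_succ]; simp
    rw [h1]
    calc (List.range j ++ [j, j + 1]) ++ [j] = List.range j ++ [j, j + 1, j] := by simp
      _ ≋ List.range j ++ [j + 1, j, j + 1] := by
          exact beq.append_left _ (beq_braid_head (by left; rfl) [])
      _ ≋ (j + 1) :: (List.range j ++ [j, j + 1]) := by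
          have : ∀ x ∈ List.range j, far x (j + 1) := by
            intro x hx; left; have := List.mem_range.mp hx; omega
          have hfc := farcomm (i := j + 1) (w := List.range j) this [j, j + 1]
          exact hfc.symm
  have hsfx : ∀ x ∈ (List.range r).map (fun x => (j + 2) + x), far x j := by
    intro x hx; simp at hx; obtain ⟨y, _, rfl⟩ := hx; right; omega
  calc (List.range (j + 2) ++ (List.range r).map (fun x => (j+2) + x)) ++ [j]
      = List.range (j + 2) ++ ((List.range r).map (fun x => (j+2) + x) ++ [j]) := by simp
    _ ≋ List.range (j + 2) ++ ([j] ++ (List.range r).map (fun x => (j+2) + x)) := by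
        refine beq.append_left _ ?_
        have h := farcomm hsfx []
        simp only [List.append_nil] at h
        simpa using h.symm
    _ = (List.range (j + 2) ++ [j]) ++ (List.range r).map (fun x => (j+2) + x) := by simp
    _ ≋ ((j+1) :: List.range (j + 2)) ++ (List.range r).map (fun x => (j+2) + x) :=
        hcore.append_right _
    _ = (j + 1) :: (List.range (j + 2) ++ (List.range r).map (fun x => (j+2) + x)) := by simp

/-- `Δ_m ≋ Δ_{m-1} ⬝ (descending word)` -/
theorem dw_alt : ∀ m, dw (m + 1) ≋ dw m ++ vw (m + 1) := by
  intro m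
  induction m with
  | zero =>
      have h1 : dw 1 = [0] := rfl
      have h2 : vw 1 = [0] := rfl
      rw [h1, dw_zero, h2]; exact beq.rfl
  | succ m ih =>
      calc dw (m + 2) = List.range (m + 2) ++ dw (m + 1) := dw_succ _
        _ ≋ List.range (m + 2) ++ (dw m ++ vw (m + 1)) := beq.append_left _ ih
        _ = (List.range (m + 1) ++ [m + 1]) ++ (dw m ++ vw (m + 1)) := by
            rw [List.range_succ]
        _ = List.range (m + 1) ++ (([m + 1] ++ dw m) ++ vw (m + 1)) := by simp
        _ ≋ List.range (m + 1) ++ ((dw m ++ [m + 1]) ++ vw (m + 1)) := by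
            refine beq.append_left _ (beq.append_right _ ?_)
            have hf : ∀ x ∈ dw m, far x (m + 1) := by
              intro x hx; left; have := dw_mem hx; omega
            have h := farcomm hf []
            simp only [List.append_nil] at h
            simpa using h
        _ = (List.range (m + 1) ++ dw m) ++ ((m + 1) :: vw (m + 1)) := by simp
        _ = dw (m + 1) ++ vw (m + 2) := by rw [← dw_succ, ← vw_succ]

/-- the crossing identity : `σ_j Δ_m ≋ Δ_m σ_{m-1-j}` -/
theorem tau_letter : ∀ m j, j < m → [j] ++ dw m ≋ dw m ++ [m - 1 - j] := by
  intro m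
  induction m with
  | zero => omega
  | succ m ih =>
      intro j hj
      rcases Nat.eq_zero_or_pos j with rfl | hj1
      · -- j = 0
        rcases Nat.eq_zero_or_pos m with rfl | hm
        · have h1 : dw 1 = [0] := rfl
          simp only [h1]; exact beq.rfl
        · calc [0] ++ dw (m + 1) ≋ [0] ++ (dw m ++ vw (m + 1)) := beq.append_left _ (dw_alt m)
            _ = ([0] ++ dw m) ++ vw (m + 1) := by simp
            _ ≋ (dw m ++ [m - 1 - 0]) ++ vw (m + 1) := (ih 0 hm).append_right _
            _ = dw m ++ ([m - 1] ++ vw (m + 1)) := by simp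
            _ ≋ dw m ++ (vw (m + 1) ++ [m]) := by
                refine beq.append_left _ ?_
                obtain ⟨m', rfl⟩ : ∃ m', m = m' + 1 := ⟨m - 1, by omega⟩
                rw [vw_succ, vw_succ]
                simp only [Nat.add_sub_cancel]
                have hnear : near m' (m' + 1) := by left; rfl
                calc [m'] ++ ((m' + 1) :: m' :: vw m')
                    = m' :: (m' + 1) :: m' :: vw m' := by simp
                  _ ≋ (m' + 1) :: m' :: (m' + 1) :: vw m' :=
                      beq_braid_head hnear _
                  _ ≋ (m' + 1) :: m' :: (vw m' ++ [m' + 1]) := by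
                      refine beq.cons _ (beq.cons _ ?_)
                      have hf : ∀ x ∈ vw m', far x (m' + 1) := by
                        intro x hx; left; have := vw_mem hx; omega
                      have h := farcomm hf []
                      simp only [List.append_nil] at h
                      exact h
                  _ = ((m' + 1) :: m' :: vw m') ++ [m' + 1] := by simp
            _ = (dw m ++ vw (m + 1)) ++ [m] := by simp
            _ ≋ dw (m + 1) ++ [m + 1 - 1 - 0] := by
                simpa using (dw_alt m).symm.append_right [m]
      · -- j ≥ 1
        obtain ⟨j', rfl⟩ : ∃ j', j = j' + 1 := ⟨j - 1, by omega⟩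
        calc [j' + 1] ++ dw (m + 1) = [j' + 1] ++ (List.range (m + 1) ++ dw m) := by
              rw [dw_succ]
          _ = ([j' + 1] ++ List.range (m + 1)) ++ dw m := by simp
          _ ≋ (List.range (m + 1) ++ [j']) ++ dw m := by
              have h := (push_lemma (show j' + 1 < m + 1 by omega)).symm.append_right (dw m)
              simpa using h
          _ = List.range (m + 1) ++ ([j'] ++ dw m) := by simp
          _ ≋ List.range (m + 1) ++ (dw m ++ [m - 1 - j']) := beq.append_left _ (ih j' (by omega))
          _ = dw (m + 1) ++ [m + 1 - 1 - (j' + 1)] := by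
              have he : m + 1 - 1 - (j' + 1) = m - 1 - j' := by omega
              rw [he, dw_succ, List.append_assoc]

/-- every generator `σ_j`, `j < m`, is a left divisor of the Δ word -/
theorem dw_head : ∀ m j, j < m → ∃ X, (∀ x ∈ X, x < m) ∧ dw m ≋ j :: X := by
  intro m
  induction m with
  | zero => omega
  | succ m ih =>
      intro j hj
      rcases Nat.eq_zero_or_pos j with rfl | hj1
      · refine ⟨(List.map Nat.succ (List.range m)) ++ dw m, ?_, ?_⟩
        · intro x hx
          rcases List.mem_append.mp hx with hx | hx
          · simp at hx; obtain ⟨y, hy, rfl⟩ := hx; omega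
          · exact (dw_mem hx).trans (Nat.lt_succ_self m)
        · rw [dw_succ, List.range_succ_eq_map]; exact beq.rfl
      · obtain ⟨j', rfl⟩ : ∃ j', j = j' + 1 := ⟨j - 1, by omega⟩
        obtain ⟨X', hX', hdw⟩ := ih j' (by omega)
        refine ⟨List.range (m + 1) ++ X', ?_, ?_⟩
        · intro x hx
          rcases List.mem_append.mp hx with hx | hx
          · simpa using List.mem_range.mp hx
          · exact (hX' x hx).trans (Nat.lt_succ_self m)
        · calc dw (m + 1) = List.range (m + 1) ++ dw m := dw_succ m
            _ ≋ List.range (m + 1) ++ (j' :: X') := beq.append_left _ hdw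
            _ = (List.range (m + 1) ++ [j']) ++ X' := by simp
            _ ≋ ((j' + 1) :: List.range (m + 1)) ++ X' := (push_lemma (by omega)).append_right _
            _ = (j' + 1) :: (List.range (m + 1) ++ X') := by simp

/-- the δ-involution on letters -/
def tauw (m : ℕ) (w : W) : W := w.map (fun x => m - 1 - x)

theorem tauw_mem {m : ℕ} (hm : 0 < m) {w : W} : ∀ x ∈ tauw m w, x < m := by
  intro x hx; simp [tauw] at hx; obtain ⟨y, _, rfl⟩ := hx; omega

theorem tauw_crossing {m : ℕ} : ∀ w : W, (∀ x ∈ w, x < m) → w ++ dw m ≋ dw m ++ tauw m w := by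
  intro w
  induction w with
  | nil => simp [tauw]; exact beq.rfl
  | cons a w ih =>
      intro hb
      calc (a :: w) ++ dw m = [a] ++ (w ++ dw m) := by simp
        _ ≋ [a] ++ (dw m ++ tauw m w) := beq.append_left _ (ih (fun x hx => hb x (by simp [hx])))
        _ = ([a] ++ dw m) ++ tauw m w := by simp
        _ ≋ (dw m ++ [m - 1 - a]) ++ tauw m w :=
            (tau_letter m a (hb a (by simp))).append_right _
        _ = dw m ++ tauw m (a :: w) := by simp [tauw]

theorem rev_dw : ∀ m, (dw m).reverse ≋ dw m := by
  intro m
  induction m with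
  | zero => exact beq.rfl
  | succ m ih =>
      calc (dw (m + 1)).reverse = (dw m).reverse ++ (List.range (m + 1)).reverse := by
            rw [dw_succ]; simp
        _ ≋ dw m ++ vw (m + 1) := ih.append_right _
        _ ≋ dw (m + 1) := (dw_alt m).symm

/-- power of the Δ word -/
def dpow (m : ℕ) : ℕ → W
  | 0 => []
  | k + 1 => dw m ++ dpow m k

theorem dpow_mem {m k x : ℕ} (h : x ∈ dpow m k) : x < m := by
  induction k with
  | zero => simp [dpow] at h
  | succ k ih =>
      rcases List.mem_append.mp h with h | h
      · exact dw_mem h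
      · exact ih h

theorem dpow_comm (m k : ℕ) : dpow m k ++ dw m = dw m ++ dpow m k := by
  induction k with
  | zero => simp [dpow]
  | succ k ih => calc dpow m (k+1) ++ dw m = dw m ++ (dpow m k ++ dw m) := by simp [dpow]
                  _ = dw m ++ (dw m ++ dpow m k) := by rw [ih]
                  _ = dw m ++ dpow m (k+1) := by simp [dpow]

theorem rev_dpow : ∀ m k, (dpow m k).reverse ≋ dpow m k := by
  intro m k
  induction k with
  | zero => exact beq.rfl
  | succ k ih =>
      calc (dpow m (k + 1)).reverse = (dpow m k).reverse ++ (dw m).reverse := by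
            simp [dpow]
        _ ≋ dpow m k ++ dw m := ih.append (rev_dw m)
        _ = dw m ++ dpow m k := dpow_comm m k
        _ = dpow m (k + 1) := rfl

/-- every bounded word left-divides a power of the Δ word -/
theorem dpow_leftdiv {m : ℕ} : ∀ w : W, (∀ x ∈ w, x < m) →
    ∃ C : W, (∀ x ∈ C, x < m) ∧ dpow m w.length ≋ w ++ C := by
  intro w
  induction w using List.reverseRecOn with
  | nil => exact fun _ => ⟨[], by simp, by simp [dpow]; exact beq.rfl⟩
  | append_singleton w j ih =>
      intro hb
      have hbw : ∀ x ∈ w, x < m := fun x hx => hb x (by simp [hx])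
      have hj : j < m := hb j (by simp)
      obtain ⟨C, hC, hdc⟩ := ih hbw
      obtain ⟨X, hX, hdx⟩ := dw_head m j hj
      refine ⟨X ++ tauw m C, ?_, ?_⟩
      · intro x hx
        rcases List.mem_append.mp hx with hx | hx
        · exact hX x hx
        · exact tauw_mem (by omega) x hx
      · calc dpow m (w ++ [j]).length = dpow m (w.length + 1) := by simp
          _ = dw m ++ dpow m w.length := rfl
          _ = dpow m w.length ++ dw m := (dpow_comm _ _).symm
          _ ≋ (w ++ C) ++ dw m := hdc.append_right _
          _ = w ++ (C ++ dw m) := by simp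
          _ ≋ w ++ (dw m ++ tauw m C) := beq.append_left _ (tauw_crossing C hC)
          _ ≋ w ++ ((j :: X) ++ tauw m C) := beq.append_left _ (hdx.append_right _)
          _ = (w ++ [j]) ++ (X ++ tauw m C) := by simp

/-- every bounded word right-divides a power of the Δ word -/
theorem dpow_rightdiv {m : ℕ} : ∀ w : W, (∀ x ∈ w, x < m) →
    ∃ C : W, dpow m w.length ≋ C ++ w := by
  intro w hb
  obtain ⟨C, hC, hdc⟩ := dpow_leftdiv w.reverse (fun x hx => hb x (by simpa using hx))
  refine ⟨C.reverse, ?_⟩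
  have h1 : (dpow m w.length).reverse ≋ (w.reverse ++ C).reverse := by
    have := hdc.rev
    simpa using this.trans beq.rfl
  have h2 : (w.reverse ++ C).reverse = C.reverse ++ w := by simp
  calc dpow m w.length ≋ (dpow m w.length).reverse := (rev_dpow m _).symm
    _ ≋ C.reverse ++ w := by rw [← h2]; exact h1

end Word
end Braid



namespace Braid

open Word

local infix:50 " ≋ " => Braid.Word.beq

variable {n : ℕ}

/-- product of a word of generator indices -/
def wordProd (n : ℕ) (w : List ℕ) : B n := (w.map (gen' n)).prod

theorem wordProd_nil : wordProd n [] = 1 := rfl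

theorem wordProd_cons (x : ℕ) (w : List ℕ) :
    wordProd n (x :: w) = gen' n x * wordProd n w := by simp [wordProd]

theorem wordProd_append (u v : List ℕ) :
    wordProd n (u ++ v) = wordProd n u * wordProd n v := by simp [wordProd]

theorem relator_eq_one {r : FreeGroup (Fin (n - 1))} (hr : r ∈ braidRels n) :
    PresentedGroup.mk (braidRels n) r = 1 :=
  (QuotientGroup.eq_one_iff _).mpr (Subgroup.subset_normalClosure hr)

theorem gen_comm {i j : Fin (n - 1)} (h : (i : ℕ) + 2 ≤ (j : ℕ)) :
    gen i * gen j = gen j * gen i := by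
  have h1 : PresentedGroup.mk (braidRels n)
      (FreeGroup.of i * FreeGroup.of j * (FreeGroup.of i)⁻¹ * (FreeGroup.of j)⁻¹) = 1 :=
    relator_eq_one (Or.inl ⟨i, j, h, rfl⟩)
  have h2 : gen i * gen j * (gen i)⁻¹ * (gen j)⁻¹ = 1 := by
    simpa [gen, PresentedGroup.of, map_mul, map_inv] using h1
  calc gen i * gen j = (gen i * gen j * (gen i)⁻¹ * (gen j)⁻¹) * (gen j * gen i) := by group
    _ = gen j * gen i := by rw [h2, one_mul]

theorem gen_braid {i j : Fin (n - 1)} (h : (j : ℕ) = (i : ℕ) + 1) :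
    gen i * gen j * gen i = gen j * gen i * gen j := by
  have h1 : PresentedGroup.mk (braidRels n)
      (FreeGroup.of i * FreeGroup.of j * FreeGroup.of i *
        (FreeGroup.of j * FreeGroup.of i * FreeGroup.of j)⁻¹) = 1 :=
    relator_eq_one (Or.inr ⟨i, j, h, rfl⟩)
  have h2 : gen i * gen j * gen i * (gen j * gen i * gen j)⁻¹ = 1 := by
    simpa [gen, PresentedGroup.of, map_mul, map_inv] using h1
  calc gen i * gen j * gen i
      = (gen i * gen j * gen i * (gen j * gen i * gen j)⁻¹) * (gen j * gen i * gen j) := by group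
    _ = gen j * gen i * gen j := by rw [h2, one_mul]

theorem gen'_comm {x y : ℕ} (h : far x y) : gen' n x * gen' n y = gen' n y * gen' n x := by
  unfold gen'
  split_ifs with hx hy hy
  · rcases h with h | h
    · exact gen_comm (i := ⟨x, hx⟩) (j := ⟨y, hy⟩) h
    · exact (gen_comm (i := ⟨y, hy⟩) (j := ⟨x, hx⟩) h).symm
  · simp
  · simp
  · simp

theorem gen'_braid {x y : ℕ} (hx : x < n - 1) (hy : y < n - 1) (h : near x y) :
    gen' n x * gen' n y * gen' n x = gen' n y * gen' n x * gen' n y := by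
  unfold gen'
  rw [dif_pos hx, dif_pos hy]
  rcases h with h | h
  · exact gen_braid (i := ⟨x, hx⟩) (j := ⟨y, hy⟩) h
  · exact (gen_braid (i := ⟨y, hy⟩) (j := ⟨x, hx⟩) h).symm

theorem wordProd_mv {u v : List ℕ} (h : Mv u v) (hb : ∀ x ∈ u, x < n - 1) :
    wordProd n u = wordProd n v := by
  cases h with
  | comm a b i j hf =>
      have key : wordProd n (i :: j :: b) = wordProd n (j :: i :: b) := by
        simp only [wordProd_cons, ← mul_assoc]
        rw [gen'_comm hf]
      rw [wordProd_append, wordProd_append, key]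
  | braid a b i j hf =>
      have hi : i < n - 1 := hb i (by simp)
      have hj : j < n - 1 := hb j (by simp)
      have key : wordProd n (i :: j :: i :: b) = wordProd n (j :: i :: j :: b) := by
        simp only [wordProd_cons, ← mul_assoc]
        rw [gen'_braid hi hj hf]
      rw [wordProd_append, wordProd_append, key]

theorem wordProd_beq {u v : List ℕ} (h : beq u v) (hb : ∀ x ∈ u, x < n - 1) :
    wordProd n u = wordProd n v := by
  induction h with
  | refl => rfl
  | tail hab hm ih => exact ih.trans (wordProd_mv hm (beq.mem_imp hab hb))

/- ### the positive braid monoid as a quotient of bounded words -/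

def BWord (n : ℕ) := {w : List ℕ // ∀ x ∈ w, x < n - 1}

def bwSetoid (n : ℕ) : Setoid (BWord n) :=
  ⟨fun u v => beq u.1 v.1, ⟨fun _ => beq.rfl, beq.symm, beq.trans⟩⟩

def PB (n : ℕ) := Quotient (bwSetoid n)

def PB.mk (w : List ℕ) (hb : ∀ x ∈ w, x < n - 1) : PB n :=
  Quotient.mk (bwSetoid n) ⟨w, hb⟩

protected def PB.mul : PB n → PB n → PB n :=
  Quotient.map₂
    (fun u v => ⟨u.1 ++ v.1, fun x hx => (List.mem_append.mp hx).elim (u.2 x) (v.2 x)⟩)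
    (fun _ _ hu _ _ hv => beq.append hu hv)

instance : Monoid (PB n) where
  mul := PB.mul
  one := PB.mk [] (by simp)
  mul_assoc a b c := by
    refine Quotient.inductionOn₃ a b c fun u v w => ?_
    apply Quotient.sound
    show beq ((u.1 ++ v.1) ++ w.1) (u.1 ++ (v.1 ++ w.1))
    rw [List.append_assoc]
  one_mul a := by
    refine Quotient.inductionOn a fun u => ?_
    apply Quotient.sound
    show beq ([] ++ u.1) u.1
    rw [List.nil_append]
  mul_one a := by
    refine Quotient.inductionOn a fun u => ?_
    apply Quotient.sound
    show beq (u.1 ++ []) u.1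
    rw [List.append_nil]

theorem PB.mk_mul (u v : List ℕ) (hu : ∀ x ∈ u, x < n - 1) (hv : ∀ x ∈ v, x < n - 1) :
    PB.mk u hu * PB.mk v hv
      = PB.mk (u ++ v) (fun x hx => (List.mem_append.mp hx).elim (hu x) (hv x)) := rfl

theorem PB.sound {u v : List ℕ} (hu : ∀ x ∈ u, x < n - 1) (hv : ∀ x ∈ v, x < n - 1)
    (h : beq u v) : PB.mk u hu = PB.mk (n := n) v hv := Quotient.sound h

theorem PB.exact {u v : List ℕ} {hu : ∀ x ∈ u, x < n - 1} {hv : ∀ x ∈ v, x < n - 1}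
    (h : PB.mk u hu = PB.mk (n := n) v hv) : beq u v := Quotient.exact h

theorem PB.ind {motive : PB n → Prop}
    (h : ∀ (w : List ℕ) (hb : ∀ x ∈ w, x < n - 1), motive (PB.mk w hb)) :
    ∀ p : PB n, motive p := by
  intro p
  induction p using Quotient.ind with
  | _ w => exact h w.1 w.2

theorem PB.mul_right_cancel {a b c : PB n} (h : a * c = b * c) : a = b := by
  induction a using PB.ind with | _ u hu =>
  induction b using PB.ind with | _ v hv =>
  induction c using PB.ind with | _ w hw =>
  rw [PB.mk_mul, PB.mk_mul] at h
  exact PB.sound _ _ (cancel_append_right (PB.exact h))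

theorem PB.mul_left_cancel {a b c : PB n} (h : c * a = c * b) : a = b := by
  induction a using PB.ind with | _ u hu =>
  induction b using PB.ind with | _ v hv =>
  induction c using PB.ind with | _ w hw =>
  rw [PB.mk_mul, PB.mk_mul] at h
  exact PB.sound _ _ (cancel_append (PB.exact h))

theorem dpow_add (m a b : ℕ) : dpow m (a + b) = dpow m a ++ dpow m b := by
  induction a with
  | zero => simp [dpow]
  | succ a ih =>
      have : a + 1 + b = (a + b) + 1 := by omega
      rw [this]
      show dw m ++ dpow m (a + b) = (dw m ++ dpow m a) ++ dpow m b
      rw [ih, List.append_assoc]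

theorem dpow_bound (m k : ℕ) : ∀ x ∈ dpow m k, x < m := fun _ h => dpow_mem h

theorem PB.commonLeftMul (r s : PB n) : ∃ (r' s' : PB n), s' * r = r' * s := by
  induction r using PB.ind with | _ u hu =>
  induction s using PB.ind with | _ v hv =>
  obtain ⟨Cu, hCu⟩ := dpow_rightdiv (m := n - 1) u hu
  obtain ⟨Cv, hCv⟩ := dpow_rightdiv (m := n - 1) v hv
  have hCub : ∀ x ∈ Cu ++ u, x < n - 1 := hCu.mem_imp (dpow_bound _ _)
  have hCvb : ∀ x ∈ Cv ++ v, x < n - 1 := hCv.mem_imp (dpow_bound _ _)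
  have hCu' : ∀ x ∈ Cu, x < n - 1 := fun x hx => hCub x (by simp [hx])
  have hCv' : ∀ x ∈ Cv, x < n - 1 := fun x hx => hCvb x (by simp [hx])
  refine ⟨PB.mk (dpow (n - 1) u.length ++ Cv)
      (fun x hx => (List.mem_append.mp hx).elim (fun h => dpow_mem h) (hCv' x)),
    PB.mk (dpow (n - 1) v.length ++ Cu)
      (fun x hx => (List.mem_append.mp hx).elim (fun h => dpow_mem h) (hCu' x)), ?_⟩
  rw [PB.mk_mul, PB.mk_mul]
  apply PB.sound
  calc (dpow (n - 1) v.length ++ Cu) ++ u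
      = dpow (n - 1) v.length ++ (Cu ++ u) := by simp
    _ ≋ dpow (n - 1) v.length ++ dpow (n - 1) u.length := beq.append_left _ hCu.symm
    _ = dpow (n - 1) (v.length + u.length) := (dpow_add _ _ _).symm
    _ = dpow (n - 1) (u.length + v.length) := by rw [Nat.add_comm]
    _ = dpow (n - 1) u.length ++ dpow (n - 1) v.length := dpow_add _ _ _
    _ ≋ dpow (n - 1) u.length ++ (Cv ++ v) := beq.append_left _ hCv
    _ = (dpow (n - 1) u.length ++ Cv) ++ v := by simp

noncomputable instance : OreLocalization.OreSet (⊤ : Submonoid (PB n)) where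
  ore_right_cancel r₁ r₂ s h := ⟨1, by rw [PB.mul_right_cancel h]⟩
  oreNum r s := (PB.commonLeftMul r s.1).choose
  oreDenom r s := ⟨(PB.commonLeftMul r s.1).choose_spec.choose, trivial⟩
  ore_eq r s := (PB.commonLeftMul r s.1).choose_spec.choose_spec

theorem numeratorHom_injective :
    Function.Injective
      (OreLocalization.numeratorHom : PB n →* OreLocalization (⊤ : Submonoid (PB n)) (PB n)) := by
  intro a b h
  rw [OreLocalization.numeratorHom_apply, OreLocalization.numeratorHom_apply,
    OreLocalization.oreDiv_eq_iff] at h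
  obtain ⟨u, v, h1, h2⟩ := h
  have huv : (u : PB n) = v := by simpa using h2
  have h1' : (u : PB n) * b = (u : PB n) * a := by
    simpa [Submonoid.smul_def, huv] using h1
  exact (PB.mul_left_cancel h1').symm

/-- the natural monoid hom from `PB n` to the braid group -/
def pbToB : PB n →* B n where
  toFun := Quotient.lift (fun u : BWord n => wordProd n u.1) (fun u v h => wordProd_beq h u.2)
  map_one' := rfl
  map_mul' a b := by
    induction a using PB.ind with | _ u hu =>
    induction b using PB.ind with | _ v hv =>
    exact wordProd_append u v

theorem pbToB_mk (w : List ℕ) (hb : ∀ x ∈ w, x < n - 1) :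
    pbToB (PB.mk w hb) = wordProd n w := rfl

/-- images of single letters as units of the Ore localization -/
noncomputable def genUnit (i : Fin (n - 1)) :
    (OreLocalization (⊤ : Submonoid (PB n)) (PB n))ˣ :=
  OreLocalization.numeratorUnit ⟨PB.mk [i.1] (by simpa using i.2), trivial⟩

theorem genUnit_val (i : Fin (n - 1)) :
    (genUnit (n := n) i : OreLocalization (⊤ : Submonoid (PB n)) (PB n))
      = OreLocalization.numeratorHom (PB.mk [i.1] (by simpa using i.2)) := rfl

theorem braidRels_hold_units :
    ∀ r ∈ braidRels n, FreeGroup.lift (fun i => genUnit (n := n) i) r = 1 := by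
  rintro r (⟨i, j, hij, rfl⟩ | ⟨i, j, hij, rfl⟩)
  · have key : genUnit (n := n) i * genUnit j = genUnit j * genUnit i := by
      apply Units.ext
      push_cast [genUnit_val]
      rw [← map_mul, ← map_mul, PB.mk_mul, PB.mk_mul]
      congr 1
      apply PB.sound
      exact beq_comm_head (Or.inl hij) []
    simp only [map_mul, map_inv, FreeGroup.lift_apply_of]
    rw [key]
    group
  · have key : genUnit (n := n) i * genUnit j * genUnit i
        = genUnit j * genUnit i * genUnit j := by
      apply Units.ext
      push_cast [genUnit_val]
      rw [← map_mul, ← map_mul, ← map_mul, ← map_mul, PB.mk_mul, PB.mk_mul, PB.mk_mul, PB.mk_mul]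
      congr 1
      apply PB.sound
      exact beq_braid_head (Or.inl hij) []
    simp only [map_mul, map_inv, FreeGroup.lift_apply_of]
    rw [key]
    group

/-- the group hom from `B n` to the units of the Ore localization -/
noncomputable def bToUnits : B n →* (OreLocalization (⊤ : Submonoid (PB n)) (PB n))ˣ :=
  PresentedGroup.toGroup braidRels_hold_units

theorem bToUnits_gen (i : Fin (n - 1)) : bToUnits (gen (n := n) i) = genUnit i :=
  PresentedGroup.toGroup.of _

theorem bToUnits_wordProd (w : List ℕ) (hb : ∀ x ∈ w, x < n - 1) :
    (bToUnits (wordProd n w) : OreLocalization (⊤ : Submonoid (PB n)) (PB n))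
      = OreLocalization.numeratorHom (PB.mk w hb) := by
  induction w with
  | nil =>
      have h1 : PB.mk (n := n) [] hb = 1 := rfl
      simp only [wordProd_nil, map_one, Units.val_one, h1]
  | cons x w ih =>
      have hx : x < n - 1 := hb x (by simp)
      have hb' : ∀ y ∈ w, y < n - 1 := fun y hy => hb y (by simp [hy])
      have hgen : gen' n x = gen (⟨x, hx⟩ : Fin (n - 1)) := by simp [gen', hx]
      have hmk : PB.mk (x :: w) hb = PB.mk [x] (by simpa using hx) * PB.mk w hb' := by
        rw [PB.mk_mul]
        apply PB.sound
        exact beq.rfl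
      rw [wordProd_cons, map_mul, hgen, bToUnits_gen, hmk, map_mul]
      push_cast [genUnit_val]
      rw [ih hb']

/-- injectivity : equal positive words in the braid group are braid-equivalent -/
theorem wordProd_inj {u v : List ℕ} (hu : ∀ x ∈ u, x < n - 1) (hv : ∀ x ∈ v, x < n - 1)
    (h : wordProd n u = wordProd n v) : beq u v := by
  have h1 := congrArg (bToUnits (n := n)) h
  have h2 : (OreLocalization.numeratorHom : PB n →* OreLocalization (⊤ : Submonoid (PB n)) (PB n)) (PB.mk u hu)
      = (OreLocalization.numeratorHom : PB n →* OreLocalization (⊤ : Submonoid (PB n)) (PB n)) (PB.mk (n := n) v hv) := by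
    rw [← bToUnits_wordProd u hu, ← bToUnits_wordProd v hv, h1]
  exact PB.exact (numeratorHom_injective h2)

end Braid

namespace Braid

open Word

local infix:50 " ≋≋ " => Braid.Word.beq

variable {n : ℕ}

theorem gen'_val (i : Fin (n - 1)) : gen' n (i : ℕ) = gen i := by
  simp [gen']

theorem gen_mem_pos (i : Fin (n - 1)) : gen i ∈ Pos n :=
  Submonoid.subset_closure ⟨i, rfl⟩

theorem gen'_mem_pos {x : ℕ} (hx : x < n - 1) : gen' n x ∈ Pos n := by
  rw [gen', dif_pos hx]
  exact gen_mem_pos _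

theorem wordProd_mem_pos (w : List ℕ) (hb : ∀ x ∈ w, x < n - 1) : wordProd n w ∈ Pos n := by
  induction w with
  | nil => exact (Pos n).one_mem
  | cons x w ih =>
      rw [wordProd_cons]
      exact (Pos n).mul_mem (gen'_mem_pos (hb x (by simp)))
        (ih (fun y hy => hb y (by simp [hy])))

theorem pos_exists_word {p : B n} (hp : p ∈ Pos n) :
    ∃ w : List ℕ, (∀ x ∈ w, x < n - 1) ∧ p = wordProd n w := by
  induction hp using Submonoid.closure_induction with
  | mem x hx =>
      obtain ⟨i, rfl⟩ := hx
      exact ⟨[(i : ℕ)], by simpa using i.2, by rw [wordProd_cons, wordProd_nil, mul_one, gen'_val]⟩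
  | one => exact ⟨[], by simp, rfl⟩
  | mul x y _ _ ihx ihy =>
      obtain ⟨u, hu, rfl⟩ := ihx
      obtain ⟨v, hv, rfl⟩ := ihy
      exact ⟨u ++ v, fun z hz => (List.mem_append.mp hz).elim (hu z) (hv z),
        (wordProd_append u v).symm⟩

theorem wordProd_flatMap (l : List ℕ) (g : ℕ → List ℕ) :
    wordProd n (l.flatMap g) = (l.map (fun k => wordProd n (g k))).prod := by
  induction l with
  | nil => rfl
  | cons a l ih => simp only [List.flatMap_cons, List.map_cons, List.prod_cons,
      wordProd_append, ih]

theorem Delta_eq_wordProd : Delta n = wordProd n (dw (n - 1)) := by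
  rw [Delta, dw, wordProd_flatMap]
  simp only [wordProd]

theorem dw_bound : ∀ x ∈ dw (n - 1), x < n - 1 := fun _ h => dw_mem h

theorem Delta_mem_pos : Delta n ∈ Pos n := by
  rw [Delta_eq_wordProd]; exact wordProd_mem_pos _ dw_bound

theorem Delta_mem_QSet : Delta n ∈ QSet n :=
  ⟨Delta_mem_pos, 1, (Pos n).one_mem, mul_one _⟩

theorem tauw_bound {w : List ℕ} (hb : ∀ x ∈ w, x < n - 1) :
    ∀ x ∈ tauw (n - 1) w, x < n - 1 := by
  intro x hx
  simp only [tauw, List.mem_map] at hx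
  obtain ⟨y, hy, rfl⟩ := hx
  have := hb y hy
  omega

theorem tauw_tauw {w : List ℕ} (hb : ∀ x ∈ w, x < n - 1) :
    tauw (n - 1) (tauw (n - 1) w) = w := by
  induction w with
  | nil => rfl
  | cons a w ih =>
      have ha := hb a (by simp)
      have : n - 1 - 1 - (n - 1 - 1 - a) = a := by omega
      simp only [tauw, List.map_cons, List.map_map] at *
      rw [List.cons_eq_cons]
      constructor
      · simpa using this
      · exact ih (fun x hx => hb x (by simp [hx]))

/-- positive elements commute across `Δ` -/
theorem pos_delta_comm {p : B n} (hp : p ∈ Pos n) :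
    ∃ q ∈ Pos n, p * Delta n = Delta n * q := by
  obtain ⟨w, hb, rfl⟩ := pos_exists_word hp
  refine ⟨wordProd n (tauw (n - 1) w), wordProd_mem_pos _ (tauw_bound hb), ?_⟩
  have h1 := tauw_crossing (m := n - 1) w hb
  have h2 : wordProd n (w ++ dw (n - 1)) = wordProd n (dw (n - 1) ++ tauw (n - 1) w) :=
    wordProd_beq h1 (fun x hx => (List.mem_append.mp hx).elim (hb x) (fun h => dw_mem h))
  rw [wordProd_append, wordProd_append, ← Delta_eq_wordProd] at h2
  exact h2

theorem delta_pos_comm {p : B n} (hp : p ∈ Pos n) :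
    ∃ q ∈ Pos n, Delta n * p = q * Delta n := by
  obtain ⟨w, hb, rfl⟩ := pos_exists_word hp
  refine ⟨wordProd n (tauw (n - 1) w), wordProd_mem_pos _ (tauw_bound hb), ?_⟩
  obtain ⟨q', hq', hcomm⟩ := pos_delta_comm (wordProd_mem_pos _ (tauw_bound hb))
  obtain ⟨w2, hb2, hw2⟩ := pos_exists_word (wordProd_mem_pos (n := n) _ (tauw_bound hb))
  have h1 := tauw_crossing (m := n - 1) (tauw (n - 1) w) (tauw_bound hb)
  have h2 : wordProd n (tauw (n - 1) w ++ dw (n - 1))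
      = wordProd n (dw (n - 1) ++ tauw (n - 1) (tauw (n - 1) w)) :=
    wordProd_beq h1 (fun x hx => (List.mem_append.mp hx).elim (tauw_bound hb x)
      (fun h => dw_mem h))
  rw [wordProd_append, wordProd_append, ← Delta_eq_wordProd, tauw_tauw hb] at h2
  exact h2.symm

/- ### length homomorphism -/

theorem exp_rels_hold :
    ∀ r ∈ braidRels n,
      FreeGroup.lift (fun _ : Fin (n - 1) => Multiplicative.ofAdd (1 : ℤ)) r = 1 := by
  rintro r (⟨i, j, hij, rfl⟩ | ⟨i, j, hij, rfl⟩) <;>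
    · simp only [map_mul, map_inv, FreeGroup.lift_apply_of]
      group

noncomputable def elen : B n →* Multiplicative ℤ :=
  PresentedGroup.toGroup exp_rels_hold

noncomputable def nlen (u : B n) : ℤ := Multiplicative.toAdd (elen u)

theorem nlen_mul (a b : B n) : nlen (a * b) = nlen a + nlen b := by
  unfold nlen
  rw [map_mul]
  rfl

theorem nlen_gen (i : Fin (n - 1)) : nlen (gen i) = 1 := by
  unfold nlen elen
  rw [show (gen i : B n) = PresentedGroup.of i from rfl, PresentedGroup.toGroup.of]
  rfl

theorem nlen_wordProd {w : List ℕ} (hb : ∀ x ∈ w, x < n - 1) :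
    nlen (wordProd n w) = w.length := by
  induction w with
  | nil =>
      show nlen (1 : B n) = 0
      unfold nlen
      rw [map_one]
      rfl
  | cons x w ih =>
      have hx : x < n - 1 := hb x (by simp)
      rw [wordProd_cons, nlen_mul, gen', dif_pos hx, nlen_gen,
        ih (fun y hy => hb y (by simp [hy]))]
      simp
      omega

theorem nlen_nonneg {p : B n} (hp : p ∈ Pos n) : 0 ≤ nlen p := by
  obtain ⟨w, hb, rfl⟩ := pos_exists_word hp
  rw [nlen_wordProd hb]
  positivity

/- ### lcm of two generators -/

theorem cw_cases (i j : ℕ) : ∀ x ∈ cw i j, x = i ∨ x = j := by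
  intro x hx
  unfold cw at hx
  split_ifs at hx <;> simp at hx <;> tauto

theorem lcmw_swap (i j : ℕ) : (i :: cw i j) ≋≋ (j :: cw j i) := by
  rcases letter_cases i j with rfl | hne | hf
  · rw [cw_self]
  · rw [cw_near hne, cw_near hne.symm]
    exact beq_braid_head hne []
  · rw [cw_far hf, cw_far hf.symm]
    exact beq_comm_head hf []

theorem cw_bound {i j : Fin (n - 1)} : ∀ x ∈ cw (i : ℕ) (j : ℕ), x < n - 1 := by
  intro x hx
  rcases cw_cases _ _ x hx with rfl | rfl
  · exact i.2
  · exact j.2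

theorem lcm_swap' {x y : ℕ} (hx : x < n - 1) (hy : y < n - 1) :
    wordProd n (x :: cw x y) = wordProd n (y :: cw y x) := by
  apply wordProd_beq (lcmw_swap _ _)
  intro z hz
  simp only [List.mem_cons] at hz
  rcases hz with rfl | hz
  · exact hx
  · rcases cw_cases _ _ z hz with rfl | rfl <;> assumption

theorem cw_bound' {x y : ℕ} (hx : x < n - 1) (hy : y < n - 1) :
    ∀ z ∈ cw x y, z < n - 1 := by
  intro z hz
  rcases cw_cases _ _ z hz with rfl | rfl <;> assumption

theorem nlen_gen' {x : ℕ} (hx : x < n - 1) : nlen (gen' n x) = 1 := by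
  rw [gen', dif_pos hx]
  exact nlen_gen _

theorem gen'_mem_pos' {x : ℕ} (hx : x < n - 1) : gen' n x ∈ Pos n := gen'_mem_pos hx

/-- leastness of the lcm of two generators : the key transferred fact -/
theorem lcm_gens' {x y : ℕ} (hx : x < n - 1) (hy : y < n - 1) {u : B n}
    (hxu : LeR (gen' n x) u) (hyu : LeR (gen' n y) u) :
    ∃ z ∈ Pos n, u = wordProd n (x :: cw x y) * z := by
  obtain ⟨p, hp, rfl⟩ := hxu
  obtain ⟨q, hq, huv⟩ := hyu
  obtain ⟨U, hU, rfl⟩ := pos_exists_word hp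
  obtain ⟨V, hV, rfl⟩ := pos_exists_word hq
  have hw : wordProd n (x :: U) = wordProd n (y :: V) := by
    rw [wordProd_cons, wordProd_cons]
    exact huv
  have hbeq := wordProd_inj (by simpa using And.intro hx hU)
    (by simpa using And.intro hy hV) hw
  obtain ⟨Z, hZU, _⟩ := lcm_cons hbeq
  have hZb : ∀ z ∈ cw x y ++ Z, z < n - 1 := beq.mem_imp hZU hU
  have hZb' : ∀ z ∈ Z, z < n - 1 := fun z hz => hZb z (by simp [hz])
  refine ⟨wordProd n Z, wordProd_mem_pos _ hZb', ?_⟩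
  calc gen' n x * wordProd n U = gen' n x * wordProd n (cw x y ++ Z) := by
        rw [wordProd_beq hZU hU]
    _ = wordProd n (x :: cw x y) * wordProd n Z := by
        rw [wordProd_append, wordProd_cons, mul_assoc]

/- ### existence of bounded joins -/

def JoinSpec (n : ℕ) (x y j : B n) : Prop :=
  j ∈ Pos n ∧ LeR x j ∧ LeR y j ∧ ∀ v, LeR x v → LeR y v → LeR j v

theorem join_main : ∀ N : ℕ,
    (∀ (x : ℕ), x < n - 1 → ∀ y u : B n, y ∈ Pos n → u ∈ Pos n → nlen u ≤ (N : ℤ) →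
      LeR (gen' n x) u → LeR y u → ∃ j, JoinSpec n (gen' n x) y j) ∧
    (∀ x y u : B n, x ∈ Pos n → y ∈ Pos n → u ∈ Pos n → nlen u ≤ (N : ℤ) →
      LeR x u → LeR y u → ∃ j, JoinSpec n x y j) := by
  intro N
  induction N using Nat.strong_induction_on with
  | _ N IH =>
  have part1 : ∀ (x : ℕ), x < n - 1 → ∀ y u : B n, y ∈ Pos n → u ∈ Pos n →
      nlen u ≤ (N : ℤ) →
      LeR (gen' n x) u → LeR y u → ∃ j, JoinSpec n (gen' n x) y j := by
    intro x hx y u hy hu hlen hxu hyu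
    obtain ⟨wy, hwyb, rfl⟩ := pos_exists_word hy
    cases wy with
    | nil =>
        refine ⟨gen' n x, gen'_mem_pos' hx, ⟨1, (Pos n).one_mem, (mul_one _).symm⟩,
          ⟨gen' n x, gen'_mem_pos' hx, by rw [wordProd_nil, one_mul]⟩, fun v hv _ => hv⟩
    | cons k wy' =>
        have hk : k < n - 1 := hwyb k (by simp)
        have hwyb' : ∀ z ∈ wy', z < n - 1 := fun z hz => hwyb z (by simp [hz])
        have hy1 : wordProd n wy' ∈ Pos n := wordProd_mem_pos _ hwyb'
        have hsplit : wordProd n (k :: wy') = gen' n k * wordProd n wy' :=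
          wordProd_cons _ _
        by_cases hki : k = x
        · subst hki
          refine ⟨wordProd n (k :: wy'), wordProd_mem_pos _ hwyb, ?_, ?_,
            fun v _ hyv => hyv⟩
          · exact ⟨wordProd n wy', hy1, hsplit⟩
          · exact ⟨1, (Pos n).one_mem, (mul_one _).symm⟩
        · have hku : LeR (gen' n k) u := by
            obtain ⟨p, hp, rfl⟩ := hyu
            exact ⟨wordProd n wy' * p, (Pos n).mul_mem hy1 hp, by
              rw [hsplit, mul_assoc]⟩
          obtain ⟨t, ht, hut⟩ := lcm_gens' hx hk hxu hku
          have hut' : u = gen' n k * (wordProd n (cw k x) * t) := by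
            rw [hut, lcm_swap' hx hk, wordProd_cons, mul_assoc]
          have hc : wordProd n (cw k x) ∈ Pos n := wordProd_mem_pos _ (cw_bound' hk hx)
          set u₁ := wordProd n (cw k x) * t with hu₁def
          have hu₁ : u₁ ∈ Pos n := (Pos n).mul_mem hc ht
          have hlen₁ : nlen u₁ ≤ ((N - 1 : ℕ) : ℤ) := by
            have h1 : nlen u = 1 + nlen u₁ := by rw [hut', nlen_mul, nlen_gen' hk]
            have h2 := nlen_nonneg hu₁
            omega
          have hNpos : 0 < N := by
            have h1 : nlen u = 1 + nlen u₁ := by rw [hut', nlen_mul, nlen_gen' hk]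
            have h2 := nlen_nonneg hu₁
            omega
          have hy1u₁ : LeR (wordProd n wy') u₁ := by
            obtain ⟨p, hp, hup⟩ := hyu
            refine ⟨p, hp, ?_⟩
            apply mul_left_cancel (a := gen' n k)
            rw [← hut', hup, hsplit, mul_assoc]
          have hcu₁ : LeR (wordProd n (cw k x)) u₁ := ⟨t, ht, rfl⟩
          obtain ⟨j', hj'pos, hcj', hyj', hleast⟩ :=
            (IH (N - 1) (by omega)).2 _ _ _ hc hy1 hu₁ hlen₁ hcu₁ hy1u₁
          refine ⟨gen' n k * j', (Pos n).mul_mem (gen'_mem_pos' hk) hj'pos, ?_, ?_, ?_⟩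
          · -- gen' x ≤ gen' k * j'
            obtain ⟨c', hc', rfl⟩ := hcj'
            refine ⟨wordProd n (cw x k) * c',
              (Pos n).mul_mem (wordProd_mem_pos _ (cw_bound' hx hk)) hc', ?_⟩
            calc gen' n k * (wordProd n (cw k x) * c')
                = (gen' n k * wordProd n (cw k x)) * c' := by rw [mul_assoc]
              _ = wordProd n (k :: cw k x) * c' := by rw [wordProd_cons]
              _ = wordProd n (x :: cw x k) * c' := by rw [← lcm_swap' hx hk]
              _ = gen' n x * (wordProd n (cw x k) * c') := by
                  rw [wordProd_cons, mul_assoc]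
          · -- y ≤ gen' k * j'
            obtain ⟨e, he, rfl⟩ := hyj'
            exact ⟨e, he, by rw [hsplit, mul_assoc]⟩
          · -- leastness
            intro v hxv hyv
            obtain ⟨s, hs, hvs⟩ := hyv
            have hkv : LeR (gen' n k) v :=
              ⟨wordProd n wy' * s, (Pos n).mul_mem hy1 hs, by rw [hvs, hsplit, mul_assoc]⟩
            obtain ⟨s', hs', hvs'⟩ := lcm_gens' hx hk hxv hkv
            have hvs'' : v = gen' n k * (wordProd n (cw k x) * s') := by
              rw [hvs', lcm_swap' hx hk, wordProd_cons, mul_assoc]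
            set v₁ := wordProd n wy' * s with hv₁def
            have hveq : gen' n k * v₁ = v := by rw [hvs, hsplit, mul_assoc]
            have hcv₁ : LeR (wordProd n (cw k x)) v₁ := by
              refine ⟨s', hs', ?_⟩
              apply mul_left_cancel (a := gen' n k)
              rw [hveq]
              exact hvs''
            have hyv₁ : LeR (wordProd n wy') v₁ := ⟨s, hs, rfl⟩
            obtain ⟨z, hz, hvz⟩ := hleast v₁ hcv₁ hyv₁
            exact ⟨z, hz, by rw [← hveq, hvz, mul_assoc]⟩
  refine ⟨part1, ?_⟩
  intro x y u hx hy hu hlen hxu hyu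
  obtain ⟨wx, hwxb, rfl⟩ := pos_exists_word hx
  cases wx with
  | nil =>
      refine ⟨y, hy, ⟨y, hy, by rw [wordProd_nil, one_mul]⟩,
        ⟨1, (Pos n).one_mem, (mul_one _).symm⟩, fun v _ hyv => hyv⟩
  | cons k wx' =>
      have hk : k < n - 1 := hwxb k (by simp)
      have hwxb' : ∀ z ∈ wx', z < n - 1 := fun z hz => hwxb z (by simp [hz])
      have hx1 : wordProd n wx' ∈ Pos n := wordProd_mem_pos _ hwxb'
      have hsplit : wordProd n (k :: wx') = gen' n k * wordProd n wx' :=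
        wordProd_cons _ _
      have hku : LeR (gen' n k) u := by
        obtain ⟨p, hp, rfl⟩ := hxu
        exact ⟨wordProd n wx' * p, (Pos n).mul_mem hx1 hp, by rw [hsplit, mul_assoc]⟩
      obtain ⟨J₁, hJ₁pos, hkJ₁, hyJ₁, hJ₁least⟩ := part1 k hk y u hy hu hlen hku hyu
      obtain ⟨d, hd, hJ₁d⟩ := hkJ₁
      obtain ⟨t₁, ht₁, hut₁⟩ := hJ₁least u hku hyu
      have hut₁' : u = gen' n k * (d * t₁) := by rw [hut₁, hJ₁d, mul_assoc]
      set u₁ := d * t₁ with hu₁def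
      have hu₁ : u₁ ∈ Pos n := (Pos n).mul_mem hd ht₁
      have hlen₁ : nlen u₁ ≤ ((N - 1 : ℕ) : ℤ) := by
        have h1 : nlen u = 1 + nlen u₁ := by rw [hut₁', nlen_mul, nlen_gen' hk]
        have h2 := nlen_nonneg hu₁
        omega
      have hNpos : 0 < N := by
        have h1 : nlen u = 1 + nlen u₁ := by rw [hut₁', nlen_mul, nlen_gen' hk]
        have h2 := nlen_nonneg hu₁
        omega
      have hx1u₁ : LeR (wordProd n wx') u₁ := by
        obtain ⟨p, hp, hup⟩ := hxu
        refine ⟨p, hp, ?_⟩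
        apply mul_left_cancel (a := gen' n k)
        rw [← hut₁', hup, hsplit, mul_assoc]
      have hdu₁ : LeR d u₁ := ⟨t₁, ht₁, rfl⟩
      obtain ⟨j', hj'pos, hxj', hdj', hleast⟩ :=
        (IH (N - 1) (by omega)).2 _ _ _ hx1 hd hu₁ hlen₁ hx1u₁ hdu₁
      refine ⟨gen' n k * j', (Pos n).mul_mem (gen'_mem_pos' hk) hj'pos, ?_, ?_, ?_⟩
      · obtain ⟨e, he, rfl⟩ := hxj'
        exact ⟨e, he, by rw [hsplit, mul_assoc]⟩
      · obtain ⟨e, he, rfl⟩ := hdj'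
        obtain ⟨s, hs, hJs⟩ := hyJ₁
        refine ⟨s * e, (Pos n).mul_mem hs he, ?_⟩
        calc gen' n k * (d * e) = (gen' n k * d) * e := (mul_assoc _ _ _).symm
          _ = J₁ * e := by rw [hJ₁d]
          _ = (y * s) * e := by rw [hJs]
          _ = y * (s * e) := mul_assoc _ _ _
      · intro v hxv hyv
        obtain ⟨s, hs, hvs⟩ := hxv
        have hkv : LeR (gen' n k) v :=
          ⟨wordProd n wx' * s, (Pos n).mul_mem hx1 hs, by rw [hvs, hsplit, mul_assoc]⟩
        obtain ⟨w', hw', hvw'⟩ := hJ₁least v hkv hyv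
        set v₁ := wordProd n wx' * s with hv₁def
        have hveq : gen' n k * v₁ = v := by rw [hvs, hsplit, mul_assoc]
        have hdv₁ : LeR d v₁ := by
          refine ⟨w', hw', ?_⟩
          apply mul_left_cancel (a := gen' n k)
          rw [hveq, hvw', hJ₁d, mul_assoc]
        have hxv₁ : LeR (wordProd n wx') v₁ := ⟨s, hs, rfl⟩
        obtain ⟨z, hz, hvz⟩ := hleast v₁ hxv₁ hdv₁
        exact ⟨z, hz, by rw [← hveq, hvz, mul_assoc]⟩

theorem join_exists {x y u : B n} (hx : x ∈ Pos n) (hy : y ∈ Pos n) (hu : u ∈ Pos n)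
    (hxu : LeR x u) (hyu : LeR y u) : ∃ j, JoinSpec n x y j :=
  (join_main (nlen u).toNat).2 x y u hx hy hu
    (by rw [Int.toNat_of_nonneg (nlen_nonneg hu)]) hxu hyu

/- ### the key lemma : extraction of a Q-prefix -/

theorem key_lemma : ∀ (wR : List ℕ), (∀ x ∈ wR, x < n - 1) → ∀ P, P ∈ Pos n →
    (∃ s ∈ Pos n, wordProd n wR * P = Delta n * s) →
    ∃ A, A ∈ QSet n ∧ LeR A P ∧ ∃ t ∈ Pos n, wordProd n wR * A = Delta n * t := by
  intro wR
  induction wR using List.reverseRecOn with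
  | nil =>
      intro _ P hP h
      obtain ⟨s, hs, hPs⟩ := h
      rw [wordProd_nil, one_mul] at hPs
      refine ⟨Delta n, Delta_mem_QSet, ⟨s, hs, hPs⟩, 1, (Pos n).one_mem, by
        rw [wordProd_nil, one_mul, mul_one]⟩
  | append_singleton wR' k ih =>
      intro hb P hP h
      obtain ⟨s, hs, hPs⟩ := h
      have hk : k < n - 1 := hb k (by simp)
      have hb' : ∀ x ∈ wR', x < n - 1 := fun x hx => hb x (by simp [hx])
      have hsplit : wordProd n (wR' ++ [k]) = wordProd n wR' * gen' n k := by
        rw [wordProd_append, wordProd_cons, wordProd_nil, mul_one]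
      have hP' : gen' n k * P ∈ Pos n := (Pos n).mul_mem (gen'_mem_pos' hk) hP
      obtain ⟨A₁, hA₁Q, hA₁P, t, ht, hA₁t⟩ := ih hb' (gen' n k * P) hP'
        ⟨s, hs, by rw [← hPs, hsplit, mul_assoc]⟩
      have hkleP : LeR (gen' n k) (gen' n k * P) := ⟨P, hP, rfl⟩
      obtain ⟨J, hJpos, hkJ, hA₁J, hJleast⟩ :=
        join_exists (gen'_mem_pos' hk) hA₁Q.1 hP' hkleP hA₁P
      obtain ⟨A, hA, hJA⟩ := hkJ
      obtain ⟨z, hz, hPz⟩ := hJleast (gen' n k * P) hkleP hA₁P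
      have hAP : LeR A P := by
        refine ⟨z, hz, ?_⟩
        apply mul_left_cancel (a := gen' n k)
        rw [← mul_assoc, ← hJA, ← hPz]
      have hA₁D : LeR A₁ (gen' n k * Delta n) := by
        obtain ⟨C, hC, hAC⟩ := hA₁Q.2
        obtain ⟨q2, hq2, hq2e⟩ := pos_delta_comm (gen'_mem_pos' hk)
        exact ⟨C * q2, (Pos n).mul_mem hC hq2, by rw [hq2e, ← hAC, mul_assoc]⟩
      have hkD : LeR (gen' n k) (gen' n k * Delta n) := ⟨Delta n, Delta_mem_pos, rfl⟩
      obtain ⟨yD, hyD, hDyD⟩ := hJleast (gen' n k * Delta n) hkD hA₁D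
      have hADelta : A * yD = Delta n := by
        apply mul_left_cancel (a := gen' n k)
        rw [← mul_assoc, ← hJA, ← hDyD]
      have hAQ : A ∈ QSet n := ⟨hA, yD, hyD, hADelta⟩
      obtain ⟨e, he, hJe⟩ := hA₁J
      refine ⟨A, hAQ, hAP, t * e, (Pos n).mul_mem ht he, ?_⟩
      calc wordProd n (wR' ++ [k]) * A = wordProd n wR' * (gen' n k * A) := by
            rw [hsplit, mul_assoc]
        _ = wordProd n wR' * (A₁ * e) := by rw [← hJA, hJe]
        _ = (wordProd n wR' * A₁) * e := by rw [mul_assoc]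
        _ = Delta n * (t * e) := by rw [hA₁t, mul_assoc]


end Braid

namespace Braid

/-- **Lemma.** If `P ≥ e`, `R ≥ e` and `RP ≥ Δ`, and `A₀` is the maximal head of `P`,
then `R A₀ ≥ Δ`. -/
theorem geL_mul_maxHead_delta {n : ℕ} (hn : 2 ≤ n) (P R A₀ : B n)
    (hP : P ∈ Pos n) (hR : R ∈ Pos n) (hRP : GeL (R * P) (Delta n))
    (hA₀ : IsMaxHead A₀ P) :
    GeL (R * A₀) (Delta n) := by
  obtain ⟨S, hS, hRPe⟩ := hRP
  obtain ⟨q, hq, hSq⟩ := pos_delta_comm hS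
  obtain ⟨wR, hwRb, rfl⟩ := pos_exists_word hR
  obtain ⟨A, hAQ, hAP, t, ht, hAt⟩ := key_lemma wR hwRb P hP ⟨q, hq, by rw [hRPe, hSq]⟩
  obtain ⟨P', hP', hPP'⟩ := hAP
  have hle : LeR A A₀ := hA₀.2.2 A hAQ P' hP' hPP'
  obtain ⟨t', ht', hAt'⟩ := hle
  obtain ⟨T, hT, hTe⟩ := delta_pos_comm ((Pos n).mul_mem ht ht')
  refine ⟨T, hT, ?_⟩
  rw [hAt', ← mul_assoc, hAt, mul_assoc, hTe]


end Braid
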